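/- Among the finitely many closed polylines obtained by permuting a fixed list of edge vectors e₁,…,e_N ∈ ℝ² (summing to zero, not all collinear), the one arranged with edge directions sorted in increasing angle (the convex positively oriented polygon) has the maximal signed area. -/

import Mathlib

open MeasureTheory Real

/-- The planar determinant `det(z, w) = z₁w₂ - z₂w₁` of two vectors of `ℝ² ≅ ℂ`. -/
def det2 (z w : ℂ) : ℝ := z.re * w.im - z.im * w.re

/-- The angle of a nonzero complex number, taken in `[0, 2π)`. -/
noncomputable def angle2pi (z : ℂ) : ℝ :=
  if 0 ≤ Complex.arg z then Complex.arg z else Complex.arg z + 2 * π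

/-- The signed area of the closed polyline starting at the origin whose successive edge
vectors are `e (σ 0), e (σ 1), …`: `(1/2) Σ_k det(v_k, e_{σ(k)})` with `v_k = Σ_{j<k} e_{σ(j)}`. -/
noncomputable def polyArea {N : ℕ} (e : Fin N → ℂ) (σ : Equiv.Perm (Fin N)) : ℝ :=
  (1 / 2) * ∑ k : Fin N, det2 (∑ j ∈ Finset.Iio k, e (σ j)) (e (σ k))

namespace Stmt15Aux

open List

/-! ### Basic algebra of `det2` -/

lemma det2_zero_left (w : ℂ) : det2 0 w = 0 := by simp [det2]

lemma det2_zero_right (z : ℂ) : det2 z 0 = 0 := by simp [det2]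

lemma det2_antisymm (z w : ℂ) : det2 z w = - det2 w z := by unfold det2; ring

lemma det2_self (z : ℂ) : det2 z z = 0 := by unfold det2; ring

lemma det2_add_left (z z' w : ℂ) : det2 (z + z') w = det2 z w + det2 z' w := by
  unfold det2; simp [Complex.add_re, Complex.add_im]; ring

lemma det2_add_right (z w w' : ℂ) : det2 z (w + w') = det2 z w + det2 z w' := by
  unfold det2; simp [Complex.add_re, Complex.add_im]; ring

lemma det2_neg_left (z w : ℂ) : det2 (-z) w = - det2 z w := by
  unfold det2; simp; ring

lemma det2_neg_right (z w : ℂ) : det2 z (-w) = - det2 z w := by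
  unfold det2; simp; ring

lemma det2_real_mul_left (r : ℝ) (z w : ℂ) : det2 ((r : ℂ) * z) w = r * det2 z w := by
  unfold det2; simp [Complex.mul_re, Complex.mul_im]; ring

lemma det2_real_mul_right (r : ℝ) (z w : ℂ) : det2 z ((r : ℂ) * w) = r * det2 z w := by
  unfold det2; simp [Complex.mul_re, Complex.mul_im]; ring

lemma det2_listSum_right (z : ℂ) (l : List ℂ) :
    det2 z l.sum = (l.map (fun w => det2 z w)).sum := by
  induction l with
  | nil => simp [det2]
  | cons a t ih => simp [det2_add_right, ih]

/-! ### Angle lemmas -/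

lemma angle2pi_nonneg (z : ℂ) : 0 ≤ angle2pi z := by
  unfold angle2pi; split
  · assumption
  · nlinarith [Complex.neg_pi_lt_arg z, Real.pi_pos]

lemma angle2pi_lt_two_pi (z : ℂ) : angle2pi z < 2 * π := by
  unfold angle2pi; split
  · nlinarith [Complex.arg_le_pi z, Real.pi_pos]
  · push_neg at *; linarith [Complex.arg_le_pi z]

lemma abs_mul_exp_angle2pi (z : ℂ) :
    (‖z‖ : ℂ) * Complex.exp ((angle2pi z : ℝ) * Complex.I) = z := by
  unfold angle2pi; split
  · exact Complex.norm_mul_exp_arg_mul_I z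
  · rw [show (((Complex.arg z + 2 * π : ℝ)) : ℂ) * Complex.I
        = (Complex.arg z : ℝ) * Complex.I + 2 * (π : ℝ) * Complex.I by push_cast; ring]
    rw [Complex.exp_add, Complex.exp_two_pi_mul_I, mul_one]
    exact Complex.norm_mul_exp_arg_mul_I z

lemma re_eq_cos (z : ℂ) : z.re = ‖z‖ * Real.cos (angle2pi z) := by
  conv_lhs => rw [← abs_mul_exp_angle2pi z]
  simp [Complex.exp_mul_I, Complex.mul_re, Complex.add_re, Complex.add_im,
    ← Complex.ofReal_cos, ← Complex.ofReal_sin]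

lemma im_eq_sin (z : ℂ) : z.im = ‖z‖ * Real.sin (angle2pi z) := by
  conv_lhs => rw [← abs_mul_exp_angle2pi z]
  simp [Complex.exp_mul_I, Complex.mul_im, Complex.add_re, Complex.add_im,
    ← Complex.ofReal_cos, ← Complex.ofReal_sin]

lemma det2_eq_sin (z w : ℂ) :
    det2 z w = ‖z‖ * ‖w‖ * Real.sin (angle2pi w - angle2pi z) := by
  unfold det2
  rw [re_eq_cos z, im_eq_sin z, re_eq_cos w, im_eq_sin w, Real.sin_sub]
  ring

lemma det2_zero_of_angle_eq {z w : ℂ} (h : angle2pi z = angle2pi w) : det2 z w = 0 := by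
  rw [det2_eq_sin, h, sub_self, Real.sin_zero, mul_zero]

lemma pi_le_angle2pi_iff (z : ℂ) :
    π ≤ angle2pi z ↔ (z.im < 0 ∨ (z.im = 0 ∧ z.re < 0)) := by
  unfold angle2pi; split
  · rename_i h
    constructor
    · intro hle
      have : Complex.arg z = π := le_antisymm (Complex.arg_le_pi z) hle
      rcases Complex.arg_eq_pi_iff.1 this with ⟨h1, h2⟩
      exact Or.inr ⟨h2, h1⟩
    · rintro (him | ⟨him, hre⟩)
      · exact absurd (Complex.arg_neg_iff.2 him) (not_lt.2 h)
      · exact le_of_eq (Complex.arg_eq_pi_iff.2 ⟨hre, him⟩).symm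
  · rename_i h
    push_neg at h
    constructor
    · intro _; exact Or.inl (Complex.arg_neg_iff.1 h)
    · intro _; linarith [Complex.neg_pi_lt_arg z]

lemma not_pi_le_both {d : ℂ} (h1 : π ≤ angle2pi d) (h2 : π ≤ angle2pi (-d)) : False := by
  rw [pi_le_angle2pi_iff] at h1 h2
  simp only [Complex.neg_im, Complex.neg_re] at h2
  rcases h1 with h | ⟨h, h'⟩ <;> rcases h2 with g | ⟨g, g'⟩ <;> linarith

lemma exists_real_of_det2_zero {y u : ℂ} (hy : y ≠ 0) (h : det2 y u = 0) :
    ∃ r : ℝ, u = (r : ℂ) * y := by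
  unfold det2 at h
  have hy' : y.re ≠ 0 ∨ y.im ≠ 0 := by
    by_contra hcon
    push_neg at hcon
    exact hy (Complex.ext (by simp [hcon.1]) (by simp [hcon.2]))
  rcases hy' with h1 | h1
  · refine ⟨u.re / y.re, Complex.ext ?_ ?_⟩
    · simp [Complex.mul_re]; field_simp
    · simp only [Complex.mul_im, Complex.ofReal_re, Complex.ofReal_im]
      field_simp
      nlinarith [h]
  · refine ⟨u.im / y.im, Complex.ext ?_ ?_⟩
    · simp only [Complex.mul_re, Complex.ofReal_re, Complex.ofReal_im]
      field_simp
      nlinarith [h]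
    · simp [Complex.mul_im]; field_simp

lemma antiparallel_of_angle {x y : ℂ} (hx : x ≠ 0) (hy : y ≠ 0)
    (h : angle2pi x = angle2pi y + π) : ∃ r : ℝ, r < 0 ∧ x = (r : ℂ) * y := by
  have hax : (0:ℝ) < ‖x‖ := norm_pos_iff.2 hx
  have hay : (0:ℝ) < ‖y‖ := norm_pos_iff.2 hy
  refine ⟨-(‖x‖ / ‖y‖), by
    have := div_pos hax hay; linarith, ?_⟩
  have h1 := abs_mul_exp_angle2pi x
  have h2 := abs_mul_exp_angle2pi y
  have hyne : (‖y‖ : ℂ) ≠ 0 := by simpa using (ne_of_gt hay)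
  have e2 : Complex.exp ((angle2pi y : ℝ) * Complex.I) = y / (‖y‖ : ℂ) := by
    rw [eq_div_iff hyne]
    linear_combination h2
  have e1 : x = (‖x‖ : ℂ) * Complex.exp (((angle2pi y + π : ℝ)) * Complex.I) := by
    conv_lhs => rw [← h1, h]
  rw [show (((angle2pi y + π : ℝ)) : ℂ) * Complex.I
      = (angle2pi y : ℝ) * Complex.I + (π:ℝ) * Complex.I by push_cast; ring,
    Complex.exp_add, Complex.exp_pi_mul_I, e2] at e1
  rw [e1]
  push_cast
  field_simp
  simp [hay.ne']

lemma sin_eq_zero_interval {θ : ℝ} (h1 : -(2*π) < θ) (h2 : θ < 0) (h : Real.sin θ = 0) :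
    θ = -π := by
  obtain ⟨n, hn⟩ := Real.sin_eq_zero_iff.mp h
  have hπ := Real.pi_pos
  have hn1 : (n:ℝ) < 0 := by nlinarith
  have hn2 : (-2:ℝ) < (n:ℝ) := by nlinarith
  have h1' : n < 0 := by exact_mod_cast hn1
  have h2' : (-2:ℤ) < n := by exact_mod_cast hn2
  have : n = -1 := by omega
  subst this
  push_cast at hn
  linarith

lemma sin_nonpos_of_det2_nonpos {z w : ℂ} (hz : z ≠ 0) (hw : w ≠ 0) (h : det2 z w ≤ 0) :
    Real.sin (angle2pi w - angle2pi z) ≤ 0 := by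
  rw [det2_eq_sin] at h
  have h1 : (0:ℝ) < ‖z‖ := norm_pos_iff.2 hz
  have h2 : (0:ℝ) < ‖w‖ := norm_pos_iff.2 hw
  by_contra hcon
  push_neg at hcon
  have := mul_pos (mul_pos h1 h2) hcon
  linarith

lemma sin_nonneg_of_det2_nonneg {z w : ℂ} (hz : z ≠ 0) (hw : w ≠ 0) (h : 0 ≤ det2 z w) :
    0 ≤ Real.sin (angle2pi w - angle2pi z) := by
  rw [det2_eq_sin] at h
  have h1 : (0:ℝ) < ‖z‖ := norm_pos_iff.2 hz
  have h2 : (0:ℝ) < ‖w‖ := norm_pos_iff.2 hw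
  by_contra hcon
  push_neg at hcon
  have := mul_pos (mul_pos h1 h2) (neg_pos.mpr hcon)
  nlinarith

/-- The wedge lemma: at a strict descent `(x, y)`, any direction `d` weakly clockwise from
both `x` and `y` points into the lower half plane (angle in `[π, 2π)`). -/
lemma wedge_lemma {x y d : ℂ} (hx : x ≠ 0) (hy : y ≠ 0) (hd : d ≠ 0)
    (hdesc : angle2pi y < angle2pi x)
    (hnp : angle2pi x ≠ angle2pi y + π)
    (hxy : 0 ≤ det2 x y)
    (h1 : det2 x d ≤ 0) (h2 : det2 y d ≤ 0) : π ≤ angle2pi d := by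
  have ha0 := angle2pi_nonneg x
  have hb0 := angle2pi_nonneg y
  have hc0 := angle2pi_nonneg d
  have ha2 := angle2pi_lt_two_pi x
  have hb2 := angle2pi_lt_two_pi y
  have hc2 := angle2pi_lt_two_pi d
  set a := angle2pi x
  set b := angle2pi y
  set c := angle2pi d
  have hπ := Real.pi_pos
  have hsin_ba : 0 ≤ Real.sin (b - a) := sin_nonneg_of_det2_nonneg hx hy hxy
  -- step 1 : π + b < a
  have hab : π + b < a := by
    by_contra hcon
    push_neg at hcon
    have hlt : a < b + π := lt_of_le_of_ne (by linarith) (by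
      intro hh; exact hnp (by linarith))
    have hs : 0 < Real.sin (a - b) := Real.sin_pos_of_pos_of_lt_pi (by linarith) (by linarith)
    have : Real.sin (b - a) = - Real.sin (a - b) := by
      rw [show b - a = -(a-b) by ring, Real.sin_neg]
    linarith
  by_contra hc
  push_neg at hc
  have hsin_cb : Real.sin (c - b) ≤ 0 := sin_nonpos_of_det2_nonpos hy hd h2
  have hsin_ca : Real.sin (c - a) ≤ 0 := sin_nonpos_of_det2_nonpos hx hd h1
  have hcb : c ≤ b := by
    by_contra hcb
    push_neg at hcb
    have : 0 < Real.sin (c - b) := Real.sin_pos_of_pos_of_lt_pi (by linarith) (by linarith)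
    linarith
  have hpos : 0 < Real.sin (c - a + 2*π) :=
    Real.sin_pos_of_pos_of_lt_pi (by linarith) (by linarith)
  rw [Real.sin_add_two_pi] at hpos
  linarith


/-! ### The pairwise sum -/

def sumPairs : List ℂ → ℝ
  | [] => 0
  | a :: t => (t.map (fun w => det2 a w)).sum + sumPairs t

@[simp] lemma sumPairs_nil : sumPairs [] = 0 := rfl

lemma sumPairs_cons (a : ℂ) (t : List ℂ) :
    sumPairs (a :: t) = (t.map (fun w => det2 a w)).sum + sumPairs t := rfl

lemma sumPairs_append (X Y : List ℂ) :
    sumPairs (X ++ Y) = sumPairs X + sumPairs Y + det2 X.sum Y.sum := by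
  induction X with
  | nil => simp [det2_zero_left]
  | cons a t ih =>
      have hmap : (Y.map (fun w => det2 a w)).sum = det2 a Y.sum :=
        (det2_listSum_right a Y).symm
      simp only [List.cons_append, sumPairs_cons, List.map_append, List.sum_append, ih,
        List.sum_cons, det2_add_left]
      rw [hmap]
      ring

lemma sumPairs_swap (A B C D : List ℂ) :
    sumPairs (A ++ (C ++ (B ++ D))) = sumPairs (A ++ (B ++ (C ++ D)))
      + 2 * det2 C.sum B.sum := by
  simp only [sumPairs_append, List.sum_append, det2_add_left, det2_add_right]
  linarith [det2_antisymm B.sum C.sum]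

lemma sumPairs_rot (X Y : List ℂ) (h : (X ++ Y).sum = 0) :
    sumPairs (Y ++ X) = sumPairs (X ++ Y) := by
  rw [List.sum_append] at h
  have hy : Y.sum = -X.sum := by linear_combination h
  rw [sumPairs_append, sumPairs_append, hy, det2_neg_left, det2_neg_right, det2_self]
  ring

lemma sumPairs_isRotated {m n : List ℂ} (h : m ~r n) (hsum : m.sum = 0) :
    sumPairs n = sumPairs m := by
  obtain ⟨k, hk⟩ := h
  subst hk
  rcases eq_or_ne m [] with rfl | hm
  · simp
  · have hlen : 0 < m.length := List.length_pos_iff.2 hm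
    rw [← List.rotate_mod]
    have hk2 : k % m.length < m.length := Nat.mod_lt _ hlen
    rw [List.rotate_eq_drop_append_take hk2.le]
    conv_rhs => rw [← List.take_append_drop (k % m.length) m]
    apply sumPairs_rot
    rw [List.take_append_drop]
    exact hsum

/-! ### Block positivity conditions at a maximizer -/

/-- Cyclic block condition: for every rotation `n` of `m` and every decomposition
`n = A ++ B ++ C ++ D`, the two adjacent blocks `B`, `C` satisfy `det2 (ΣB) (ΣC) ≥ 0`. -/
def BC (m : List ℂ) : Prop :=
  ∀ (n A B C D : List ℂ), m ~r n → n = A ++ (B ++ (C ++ D)) → 0 ≤ det2 B.sum C.sum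

lemma no_antiparallel {m : List ℂ} (hBC : BC m) (hne : ∀ x ∈ m, x ≠ 0)
    (hspan : ∃ x ∈ m, ∃ y ∈ m, det2 x y ≠ 0)
    {x y : ℂ} {T : List ℂ} (hrot : m ~r (x :: y :: T)) :
    angle2pi x ≠ angle2pi y + π := by
  intro hang
  have hxm : x ∈ m := (hrot.perm.mem_iff).2 (by simp)
  have hym : y ∈ m := (hrot.perm.mem_iff).2 (by simp)
  have hx := hne x hxm
  have hy := hne y hym
  obtain ⟨r, hr, hxy⟩ := antiparallel_of_angle hx hy hang
  have hdxy : det2 x y = 0 := by rw [hxy, det2_real_mul_left, det2_self, mul_zero]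
  have hrot2 : m ~r (y :: (T ++ [x])) := by
    refine hrot.trans ?_
    have h := List.isRotated_append (l := [x]) (l' := y :: T)
    simpa using h
  have hpre1 : ∀ P D', T = P ++ D' → 0 ≤ det2 x (y + P.sum) := by
    intro P D' hPD
    have h := hBC (x :: y :: T) [] [x] (y :: P) D' hrot (by simp [hPD])
    simpa using h
  have hpre2 : ∀ P D', T = P ++ D' → 0 ≤ det2 y P.sum := by
    intro P D' hPD
    have h := hBC (y :: (T ++ [x])) [] [y] P (D' ++ [x]) hrot2
      (by simp [hPD, List.append_assoc])
    simpa using h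
  have hkey : ∀ P D', T = P ++ D' → det2 y P.sum = 0 := by
    intro P D' hPD
    have h1 := hpre1 P D' hPD
    have h2 := hpre2 P D' hPD
    have e : det2 x P.sum = r * det2 y P.sum := by rw [hxy, det2_real_mul_left]
    rw [det2_add_right, hdxy, e] at h1
    nlinarith
  have hTzero : ∀ t ∈ T, det2 y t = 0 := by
    intro t ht
    obtain ⟨P, D', hPD⟩ := List.append_of_mem ht
    have h2 := hkey (P ++ [t]) D' (by simp [hPD])
    have h1 := hkey P (t :: D') hPD
    rw [List.sum_append, List.sum_cons, List.sum_nil, add_zero, det2_add_right] at h2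
    linarith
  have hall : ∀ u ∈ m, det2 y u = 0 := by
    intro u hu
    have hu' : u ∈ x :: y :: T := (hrot.perm.mem_iff).1 hu
    rcases List.mem_cons.1 hu' with h | hu'
    · rw [h, hxy, det2_real_mul_right, det2_self, mul_zero]
    · rcases List.mem_cons.1 hu' with h | hu'
      · rw [h]; exact det2_self y
      · exact hTzero _ hu'
  obtain ⟨u, hu, v, hv, huv⟩ := hspan
  obtain ⟨ru, hru⟩ := exists_real_of_det2_zero hy (hall u hu)
  obtain ⟨rv, hrv⟩ := exists_real_of_det2_zero hy (hall v hv)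
  apply huv
  rw [hru, hrv, det2_real_mul_left, det2_real_mul_right, det2_self]
  ring

lemma form2 {m : List ℂ} (hBC : BC m) (hne : ∀ x ∈ m, x ≠ 0)
    (hspan : ∃ x ∈ m, ∃ y ∈ m, det2 x y ≠ 0)
    {a b c : ℂ} {V : List ℂ} (hrot : m ~r (a :: b :: c :: V))
    (h1 : angle2pi b < angle2pi a) (h2 : angle2pi c < angle2pi b) : False := by
  have ham : a ∈ m := (hrot.perm.mem_iff).2 (by simp)
  have hbm : b ∈ m := (hrot.perm.mem_iff).2 (by simp)
  have hcm : c ∈ m := (hrot.perm.mem_iff).2 (by simp)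
  have ha := hne a ham
  have hb := hne b hbm
  have hc := hne c hcm
  have hab : 0 ≤ det2 a b := by
    have h := hBC _ [] [a] [b] (c :: V) hrot (by simp)
    simpa using h
  have hbc : 0 ≤ det2 b c := by
    have h := hBC _ [a] [b] [c] V hrot (by simp)
    simpa using h
  have hπab : angle2pi a ≠ angle2pi b + π := no_antiparallel hBC hne hspan hrot
  have hrot2 : m ~r (b :: c :: (V ++ [a])) := by
    refine hrot.trans ?_
    have h := List.isRotated_append (l := [a]) (l' := b :: c :: V)
    simpa using h
  have hπbc : angle2pi b ≠ angle2pi c + π := no_antiparallel hBC hne hspan hrot2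
  have W1 : π ≤ angle2pi b := by
    refine wedge_lemma hb hc hb h2 hπbc hbc (det2_self b).le ?_
    have := det2_antisymm b c
    linarith
  have W2 : π ≤ angle2pi (-b) := by
    refine wedge_lemma ha hb (neg_ne_zero.2 hb) h1 hπab hab ?_ ?_
    · rw [det2_neg_right]; linarith
    · rw [det2_neg_right, det2_self]; simp
  exact not_pi_le_both W1 W2

lemma form1 {m : List ℂ} (hBC : BC m) (hne : ∀ x ∈ m, x ≠ 0) (hsum : m.sum = 0)
    (hspan : ∃ x ∈ m, ∃ y ∈ m, det2 x y ≠ 0)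
    {p0 p1 q0 q1 : ℂ} {U V : List ℂ}
    (hrot : m ~r (p0 :: p1 :: (U ++ q0 :: q1 :: V)))
    (hp : angle2pi p1 < angle2pi p0) (hq : angle2pi q1 < angle2pi q0) : False := by
  have hp0m : p0 ∈ m := (hrot.perm.mem_iff).2 (by simp)
  have hp1m : p1 ∈ m := (hrot.perm.mem_iff).2 (by simp)
  have hq0m : q0 ∈ m := (hrot.perm.mem_iff).2 (by simp)
  have hq1m : q1 ∈ m := (hrot.perm.mem_iff).2 (by simp)
  have hp0 := hne p0 hp0m
  have hp1 := hne p1 hp1m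
  have hq0 := hne q0 hq0m
  have hq1 := hne q1 hq1m
  have hr3 : m ~r (q0 :: q1 :: (V ++ p0 :: p1 :: U)) := by
    refine hrot.trans ?_
    have h := List.isRotated_append (l := p0 :: p1 :: U) (l' := q0 :: q1 :: V)
    simpa [List.append_assoc] using h
  have hr5 : m ~r (p1 :: (U ++ q0 :: q1 :: (V ++ [p0]))) := by
    refine hrot.trans ?_
    have h := List.isRotated_append (l := [p0]) (l' := p1 :: (U ++ q0 :: q1 :: V))
    simpa [List.append_assoc] using h
  have hr4 : m ~r (q1 :: (V ++ p0 :: p1 :: (U ++ [q0]))) := by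
    refine hr3.trans ?_
    have h := List.isRotated_append (l := [q0]) (l' := q1 :: (V ++ p0 :: p1 :: U))
    simpa [List.append_assoc] using h
  have hp0p1 : 0 ≤ det2 p0 p1 := by
    have h := hBC _ [] [p0] [p1] (U ++ q0 :: q1 :: V) hrot (by simp)
    simpa using h
  have hq0q1 : 0 ≤ det2 q0 q1 := by
    have h := hBC _ [] [q0] [q1] (V ++ p0 :: p1 :: U) hr3 (by simp)
    simpa using h
  have hπp : angle2pi p0 ≠ angle2pi p1 + π := no_antiparallel hBC hne hspan hrot
  have hπq : angle2pi q0 ≠ angle2pi q1 + π := no_antiparallel hBC hne hspan hr3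
  have hd1 : 0 ≤ det2 p0 (p1 + (U.sum + q0)) := by
    have h := hBC _ [] [p0] (p1 :: (U ++ [q0])) (q1 :: V) hrot
      (by simp [List.append_assoc])
    simpa using h
  have hd3 : 0 ≤ det2 q0 (q1 + (V.sum + p0)) := by
    have h := hBC _ [] [q0] (q1 :: (V ++ [p0])) (p1 :: U) hr3
      (by simp [List.append_assoc])
    simpa using h
  have hd5 : 0 ≤ det2 (p1 + (U.sum + q0)) q1 := by
    have h := hBC _ [] (p1 :: (U ++ [q0])) [q1] (V ++ [p0]) hr5
      (by simp [List.append_assoc])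
    simpa using h
  have hd4 : 0 ≤ det2 (q1 + (V.sum + p0)) p1 := by
    have h := hBC _ [] (q1 :: (V ++ [p0])) [p1] (U ++ [q0]) hr4
      (by simp [List.append_assoc])
    simpa using h
  have hA' : 0 ≤ det2 (p1 + U.sum) (q0 + q1) := by
    have h := hBC _ [] (p1 :: U) [q0, q1] (V ++ [p0]) hr5
      (by simp [List.append_assoc])
    simpa using h
  have hl1sum : p0 + (p1 + (U.sum + (q0 + (q1 + V.sum)))) = 0 := by
    have h0 : (p0 :: p1 :: (U ++ q0 :: q1 :: V)).sum = 0 := by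
      rw [← hrot.perm.sum_eq]; exact hsum
    simpa using h0
  set d : ℂ := p1 + (U.sum + q0) with hd_def
  have hS2d : q1 + (V.sum + p0) = -d := by rw [hd_def]; linear_combination hl1sum
  rw [hS2d] at hd3 hd4
  rcases eq_or_ne d 0 with hd0 | hd0
  · have hPU : p1 + U.sum = -q0 := by
      rw [hd_def] at hd0; linear_combination hd0
    rw [hPU, det2_neg_left, det2_add_right, det2_self, zero_add] at hA'
    have hzero : det2 q0 q1 = 0 := le_antisymm (by linarith) hq0q1
    rw [det2_eq_sin] at hzero
    have h1 : (0:ℝ) < ‖q0‖ := norm_pos_iff.2 hq0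
    have h2 : (0:ℝ) < ‖q1‖ := norm_pos_iff.2 hq1
    have hsin : Real.sin (angle2pi q1 - angle2pi q0) = 0 := by
      rcases mul_eq_zero.1 hzero with h | h
      · rcases mul_eq_zero.1 h with h' | h' <;> nlinarith
      · exact h
    have hθ : angle2pi q1 - angle2pi q0 = -π := by
      apply sin_eq_zero_interval _ (by linarith) hsin
      have := angle2pi_nonneg q1
      have := angle2pi_lt_two_pi q0
      linarith
    exact hπq (by linarith)
  · have W1 : π ≤ angle2pi d := by
      refine wedge_lemma hq0 hq1 hd0 hq hπq hq0q1 ?_ ?_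
      · rw [det2_neg_right] at hd3; linarith
      · have := det2_antisymm d q1; linarith
    have W2 : π ≤ angle2pi (-d) := by
      refine wedge_lemma hp0 hp1 (neg_ne_zero.2 hd0) hp hπp hp0p1 ?_ ?_
      · rw [det2_neg_right]; linarith
      · have := det2_antisymm p1 (-d); linarith
    exact not_pi_le_both W1 W2

/-! ### Finding a sorted rotation -/

def aLE (u v : ℂ) : Prop := angle2pi u ≤ angle2pi v

instance : IsTrans ℂ aLE := ⟨fun _ _ _ h1 h2 => le_trans h1 h2⟩

lemma exists_descent {l : List ℂ} (h : ¬ List.Chain' aLE l) :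
    ∃ P x y Q, l = P ++ x :: y :: Q ∧ angle2pi y < angle2pi x := by
  induction l with
  | nil => exact absurd List.isChain_nil h
  | cons a t ih =>
    cases t with
    | nil => exact absurd (List.isChain_singleton a) h
    | cons b s =>
      rw [List.Chain', List.isChain_cons_cons] at h
      by_cases hR : aLE a b
      · have h2 : ¬ List.Chain' aLE (b :: s) := fun hh => h ⟨hR, hh⟩
        obtain ⟨P, x, y, Q, heq, hlt⟩ := ih h2
        exact ⟨a :: P, x, y, Q, by simp [heq], hlt⟩
      · exact ⟨[], a, b, s, rfl, lt_of_not_ge hR⟩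

lemma phase2 {m : List ℂ} (hBC : BC m) (hne : ∀ x ∈ m, x ≠ 0) (hsum : m.sum = 0)
    (hspan : ∃ x ∈ m, ∃ y ∈ m, det2 x y ≠ 0)
    {x y : ℂ} (T : List ℂ) (hr1 : m ~r (x :: y :: T)) (hxy : angle2pi y < angle2pi x)
    {P2 Q2 : List ℂ} {u v : ℂ}
    (h2eq : y :: (T ++ [x]) = P2 ++ u :: v :: Q2) (huv : angle2pi v < angle2pi u) :
    False := by
  cases P2 with
  | nil =>
    simp only [List.nil_append] at h2eq
    obtain ⟨hu, hTx⟩ := List.cons_eq_cons.1 h2eq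
    subst hu
    cases T with
    | nil =>
      simp only [List.nil_append] at hTx
      obtain ⟨hv, -⟩ := List.cons_eq_cons.1 hTx
      rw [← hv] at huv
      exact absurd hxy (not_lt.2 huv.le)
    | cons w T' =>
      simp only [List.cons_append] at hTx
      obtain ⟨hv, -⟩ := List.cons_eq_cons.1 hTx
      subst hv
      exact form2 hBC hne hspan hr1 hxy huv
  | cons h2h P2' =>
    simp only [List.cons_append] at h2eq
    obtain ⟨hh, hTx⟩ := List.cons_eq_cons.1 h2eq
    subst hh
    rcases List.eq_nil_or_concat Q2 with rfl | ⟨Q2', z, rfl⟩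
    · have hTx' : T ++ [x] = (P2' ++ [u]) ++ [v] := by rw [hTx]; simp
      have hlen : T.length = (P2' ++ [u]).length := by
        have := congrArg List.length hTx'
        simp at this ⊢
        omega
      obtain ⟨hT', hxv⟩ := List.append_inj hTx' hlen
      obtain ⟨hv, -⟩ := List.cons_eq_cons.1 hxv
      have hr6 : m ~r (x :: y :: (P2' ++ [u])) := by rw [← hT']; exact hr1
      have hr7 : m ~r (u :: x :: y :: P2') := by
        refine hr6.trans ?_
        have h := List.isRotated_append (l := x :: y :: P2') (l' := [u])
        simpa [List.append_assoc] using h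
      rw [← hv] at huv
      exact form2 hBC hne hspan hr7 huv hxy
    · have hTx' : T ++ [x] = (P2' ++ u :: v :: Q2') ++ [z] := by
        rw [hTx, List.concat_eq_append]
        simp [List.append_assoc]
      have hlen : T.length = (P2' ++ u :: v :: Q2').length := by
        have := congrArg List.length hTx'
        simp at this ⊢
        omega
      obtain ⟨hT', hxz⟩ := List.append_inj hTx' hlen
      have hr8 : m ~r (x :: y :: (P2' ++ u :: v :: Q2')) := by rw [← hT']; exact hr1
      exact form1 hBC hne hsum hspan hr8 hxy huv

lemma exists_sorted_rotation {m : List ℂ} (hBC : BC m) (hne : ∀ x ∈ m, x ≠ 0)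
    (hsum : m.sum = 0) (hspan : ∃ x ∈ m, ∃ y ∈ m, det2 x y ≠ 0) :
    ∃ n, m ~r n ∧ List.Pairwise aLE n := by
  by_contra hcon
  push_neg at hcon
  have hdm : ∀ n, m ~r n → ∃ P x y Q, n = P ++ x :: y :: Q ∧ angle2pi y < angle2pi x := by
    intro n hr
    apply exists_descent
    intro hch
    exact hcon n hr ((List.isChain_iff_pairwise).1 hch)
  obtain ⟨P, x, y, Q, hmeq, hxy⟩ := hdm m (List.IsRotated.refl m)
  have hr1 : m ~r (x :: y :: (Q ++ P)) := by
    rw [hmeq]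
    have h := List.isRotated_append (l := P) (l' := x :: y :: Q)
    simpa [List.append_assoc] using h
  have hr2 : m ~r (y :: ((Q ++ P) ++ [x])) := by
    refine hr1.trans ?_
    have h := List.isRotated_append (l := [x]) (l' := y :: (Q ++ P))
    simpa using h
  obtain ⟨P2, u, v, Q2, h2eq, huv⟩ := hdm _ hr2
  exact phase2 hBC hne hsum hspan (Q ++ P) hr1 hxy h2eq huv


/-! ### Sorted lists that are permutations of each other have equal `sumPairs` -/

lemma pull_min (b : ℂ) : ∀ (t : List ℂ), b ∈ t → (∀ x ∈ t, angle2pi b ≤ angle2pi x) →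
    List.Pairwise aLE t →
    sumPairs t = ((t.erase b).map (fun w => det2 b w)).sum + sumPairs (t.erase b) := by
  intro t
  induction t with
  | nil => intro h; simp at h
  | cons c s ih =>
    intro hb hmin hpw
    by_cases hbc : b = c
    · subst hbc
      rw [List.erase_cons_head]
      exact sumPairs_cons b s
    · have hbs : b ∈ s := by
        rcases List.mem_cons.1 hb with h | h
        · exact absurd h hbc
        · exact h
      have herase : (c :: s).erase b = c :: s.erase b :=
        List.erase_cons_tail (by simp only [beq_iff_eq]; exact fun h => hbc h.symm)
      obtain ⟨hpw1, hpw2⟩ := List.pairwise_cons.1 hpw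
      have h1 : angle2pi c = angle2pi b := _root_.le_antisymm (hpw1 b hbs) (hmin c (by simp))
      have hz1 : det2 c b = 0 := det2_zero_of_angle_eq h1
      have hz2 : det2 b c = 0 := det2_zero_of_angle_eq h1.symm
      have hsperm : s.Perm (b :: s.erase b) := List.perm_cons_erase hbs
      have hmapc : (s.map (fun w => det2 c w)).sum
          = det2 c b + ((s.erase b).map (fun w => det2 c w)).sum := by
        rw [(hsperm.map _).sum_eq]; simp
      have hIH := ih hbs (fun x hx => hmin x (List.mem_cons_of_mem _ hx)) hpw2
      rw [herase, sumPairs_cons, sumPairs_cons, hmapc, hIH]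
      simp only [List.map_cons, List.sum_cons]
      linarith

lemma sumPairs_eq_of_sorted : ∀ (n : ℕ) (l1 l2 : List ℂ), l1.length = n → l1.Perm l2 →
    List.Pairwise aLE l1 → List.Pairwise aLE l2 → sumPairs l1 = sumPairs l2 := by
  intro n
  induction n with
  | zero =>
    intro l1 l2 hlen hperm _ _
    have h1 : l1 = [] := List.length_eq_zero_iff.1 hlen
    subst h1
    have h2 : l2 = [] := List.length_eq_zero_iff.1 (by rw [← hperm.length_eq, hlen])
    subst h2
    rfl
  | succ n ih =>
    intro l1 l2 hlen hperm hpw1 hpw2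
    cases l1 with
    | nil => simp at hlen
    | cons a t1 =>
      cases l2 with
      | nil => have := hperm.length_eq; simp at this
      | cons b t2 =>
        obtain ⟨hpw1a, hpw1t⟩ := List.pairwise_cons.1 hpw1
        obtain ⟨hpw2b, hpw2t⟩ := List.pairwise_cons.1 hpw2
        have hbmem : b ∈ a :: t1 := hperm.mem_iff.2 (by simp)
        have hamem : a ∈ b :: t2 := hperm.mem_iff.1 (by simp)
        have hab : angle2pi a = angle2pi b := by
          apply _root_.le_antisymm
          · rcases List.mem_cons.1 hbmem with h | h
            · exact le_of_eq (by rw [h])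
            · exact hpw1a b h
          · rcases List.mem_cons.1 hamem with h | h
            · exact le_of_eq (by rw [h])
            · exact hpw2b a h
        by_cases hba : b = a
        · subst hba
          have ht : t1.Perm t2 := hperm.cons_inv
          have hlen' : t1.length = n := by simpa using hlen
          have hIH := ih t1 t2 hlen' ht hpw1t hpw2t
          rw [sumPairs_cons, sumPairs_cons, hIH, (ht.map _).sum_eq]
        · have hbt1 : b ∈ t1 := by
            rcases List.mem_cons.1 hbmem with h | h
            · exact absurd h hba
            · exact h
          have herase : (a :: t1).erase b = a :: t1.erase b :=
            List.erase_cons_tail (by simp only [beq_iff_eq]; exact fun h => hba h.symm)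
          have ht2 : t2.Perm (a :: t1.erase b) := by
            have h := (List.cons_perm_iff_perm_erase).1 hperm.symm
            rw [herase] at h
            exact h.2
          have hpwA : List.Pairwise aLE (a :: t1.erase b) := by
            rw [List.pairwise_cons]
            exact ⟨fun x hx => hpw1a x (List.mem_of_mem_erase hx),
              List.Pairwise.sublist List.erase_sublist hpw1t⟩
          have hlen2 : t2.length = n := by
            have h1 := hperm.length_eq
            simp only [List.length_cons] at h1 hlen
            omega
          have hIH := ih t2 (a :: t1.erase b) hlen2 ht2 hpw2t hpwA
          have hminb : ∀ x ∈ t1, angle2pi b ≤ angle2pi x := by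
            intro x hx
            rw [← hab]
            exact hpw1a x hx
          have hpull := pull_min b t1 hbt1 hminb hpw1t
          have hz : det2 a b = 0 := det2_zero_of_angle_eq hab
          have hz' : det2 b a = 0 := det2_zero_of_angle_eq hab.symm
          have hmap1 : (t1.map (fun w => det2 a w)).sum
              = det2 a b + ((t1.erase b).map (fun w => det2 a w)).sum := by
            rw [((List.perm_cons_erase hbt1).map _).sum_eq]; simp
          have hmap2 : (t2.map (fun w => det2 b w)).sum
              = det2 b a + ((t1.erase b).map (fun w => det2 b w)).sum := by
            rw [(ht2.map _).sum_eq]; simp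
          rw [sumPairs_cons, sumPairs_cons, hpull, hmap1, hmap2, hIH, sumPairs_cons]
          linarith

/-! ### Connecting `polyArea` with `sumPairs` -/

lemma det2_finsetSum_left {ι : Type*} (s : Finset ι) (f : ι → ℂ) (w : ℂ) :
    det2 (∑ j ∈ s, f j) w = ∑ j ∈ s, det2 (f j) w := by
  unfold det2
  rw [Complex.re_sum, Complex.im_sum, Finset.sum_mul, Finset.sum_mul, ← Finset.sum_sub_distrib]

lemma Iio_succ_sum {M : Type*} [AddCommMonoid M] {n : ℕ} (f : Fin (n+1) → M) (k : Fin n) :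
    ∑ j ∈ Finset.Iio k.succ, f j = f 0 + ∑ j ∈ Finset.Iio k, f j.succ := by
  have hins : Finset.Iio k.succ
      = insert (0 : Fin (n+1)) ((Finset.Iio k).map ⟨Fin.succ, Fin.succ_injective n⟩) := by
    ext j
    simp only [Finset.mem_Iio, Finset.mem_insert, Finset.mem_map, Function.Embedding.coeFn_mk]
    constructor
    · intro hj
      rcases Fin.eq_zero_or_eq_succ j with rfl | ⟨i, rfl⟩
      · exact Or.inl rfl
      · exact Or.inr ⟨i, Fin.succ_lt_succ_iff.1 hj, rfl⟩
    · rintro (rfl | ⟨i, hi, rfl⟩)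
      · exact Fin.succ_pos k
      · exact Fin.succ_lt_succ_iff.2 hi
  have h0 : (0 : Fin (n+1)) ∉ (Finset.Iio k).map ⟨Fin.succ, Fin.succ_injective n⟩ := by
    intro hmem
    rw [Finset.mem_map] at hmem
    obtain ⟨x, -, hx⟩ := hmem
    exact Fin.succ_ne_zero x hx
  rw [hins, Finset.sum_insert h0, Finset.sum_map]
  rfl

lemma sumPairs_ofFn : ∀ (M : ℕ) (g : Fin M → ℂ),
    sumPairs (List.ofFn g) = ∑ k : Fin M, ∑ j ∈ Finset.Iio k, det2 (g j) (g k) := by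
  intro M
  induction M with
  | zero => intro g; simp
  | succ M ih =>
    intro g
    rw [List.ofFn_succ, sumPairs_cons, ih (fun i => g i.succ), Fin.sum_univ_succ]
    have h0 : ∑ j ∈ Finset.Iio (0 : Fin (M+1)), det2 (g j) (g 0) = 0 := by
      apply Finset.sum_eq_zero
      intro j hj
      rw [Finset.mem_Iio] at hj
      exact absurd hj (by simp)
    have hterm : ∀ k : Fin M,
        ∑ j ∈ Finset.Iio k.succ, det2 (g j) (g k.succ)
          = det2 (g 0) (g k.succ) + ∑ j ∈ Finset.Iio k, det2 (g j.succ) (g k.succ) :=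
      fun k => Iio_succ_sum (fun j => det2 (g j) (g k.succ)) k
    rw [Finset.sum_congr rfl (fun k _ => hterm k), Finset.sum_add_distrib, h0]
    rw [List.map_ofFn, List.sum_ofFn]
    simp only [Function.comp]
    ring

end Stmt15Aux

/-- Among all closed polylines obtained by permuting a fixed list of nonzero edge vectors
summing to zero and spanning at least two directions, the one sorted by increasing angle
(the convex positively oriented polygon) has the maximal signed area. -/
theorem stmt15 (N : ℕ) (e : Fin N → ℂ) (hne : ∀ j, e j ≠ 0)
    (hsum : ∑ j, e j = 0) (hspan : ∃ j k, det2 (e j) (e k) ≠ 0)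
    (σ : Equiv.Perm (Fin N)) (hsorted : Monotone fun k => angle2pi (e (σ k))) :
    ∀ τ : Equiv.Perm (Fin N), polyArea e τ ≤ polyArea e σ := by
  classical
  intro τ
  have hpoly : ∀ ρ : Equiv.Perm (Fin N),
      polyArea e ρ = (1/2) * Stmt15Aux.sumPairs (List.ofFn (e ∘ ρ)) := by
    intro ρ
    unfold polyArea
    rw [Stmt15Aux.sumPairs_ofFn N (e ∘ ρ)]
    congr 1
    apply Finset.sum_congr rfl
    intro k _
    rw [Stmt15Aux.det2_finsetSum_left]
    rfl
  have hL0sum : (List.ofFn e).sum = 0 := by rw [List.sum_ofFn]; exact hsum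
  obtain ⟨mx, hmS, hmaxx⟩ := Finset.exists_max_image
    (List.ofFn e).permutations.toFinset Stmt15Aux.sumPairs
    ⟨List.ofFn e, by simp [List.mem_toFinset, List.mem_permutations]⟩
  have hmperm : mx.Perm (List.ofFn e) := List.mem_permutations.1 (List.mem_toFinset.1 hmS)
  have hmax' : ∀ l : List ℂ, l.Perm (List.ofFn e) →
      Stmt15Aux.sumPairs l ≤ Stmt15Aux.sumPairs mx := by
    intro l hl
    exact hmaxx l (by simp [List.mem_toFinset, List.mem_permutations, hl])
  have hmsum : mx.sum = 0 := by rw [hmperm.sum_eq]; exact hL0sum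
  have hmne : ∀ x ∈ mx, x ≠ 0 := by
    intro x hx
    have hx' : x ∈ List.ofFn e := hmperm.mem_iff.1 hx
    rw [List.mem_ofFn] at hx'
    obtain ⟨i, rfl⟩ := hx'
    exact hne i
  have hmspan : ∃ x ∈ mx, ∃ y ∈ mx, det2 x y ≠ 0 := by
    obtain ⟨j, k, hjk⟩ := hspan
    exact ⟨e j, hmperm.mem_iff.2 (List.mem_ofFn.2 ⟨j, rfl⟩),
      e k, hmperm.mem_iff.2 (List.mem_ofFn.2 ⟨k, rfl⟩), hjk⟩
  have hBCm : Stmt15Aux.BC mx := by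
    intro n A B C D hr hn
    have hnperm : n.Perm (List.ofFn e) := (hr.perm.symm).trans hmperm
    have hswapperm : (A ++ (C ++ (B ++ D))).Perm (List.ofFn e) := by
      refine List.Perm.trans ?_ hnperm
      rw [hn]
      apply List.Perm.append_left
      have h2 : ((C ++ B) ++ D).Perm ((B ++ C) ++ D) :=
        (List.perm_append_comm).append_right D
      rw [List.append_assoc, List.append_assoc] at h2
      exact h2
    have heq1 : Stmt15Aux.sumPairs n = Stmt15Aux.sumPairs mx :=
      Stmt15Aux.sumPairs_isRotated hr hmsum
    have heq2 := Stmt15Aux.sumPairs_swap A B C D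
    rw [← hn] at heq2
    have hle := hmax' _ hswapperm
    have hanti := Stmt15Aux.det2_antisymm B.sum C.sum
    linarith
  obtain ⟨ns, hrot, hsorted'⟩ := Stmt15Aux.exists_sorted_rotation hBCm hmne hmsum hmspan
  have hns : Stmt15Aux.sumPairs ns = Stmt15Aux.sumPairs mx :=
    Stmt15Aux.sumPairs_isRotated hrot hmsum
  have hσpw : List.Pairwise Stmt15Aux.aLE (List.ofFn (e ∘ σ)) := by
    rw [List.pairwise_ofFn]
    intro i j hij
    exact hsorted hij.le
  have hσperm : (List.ofFn (e ∘ σ)).Perm ns :=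
    ((Equiv.Perm.ofFn_comp_perm σ e).trans hmperm.symm).trans hrot.perm
  have hσeq : Stmt15Aux.sumPairs (List.ofFn (e ∘ σ)) = Stmt15Aux.sumPairs ns :=
    Stmt15Aux.sumPairs_eq_of_sorted (List.ofFn (e ∘ σ)).length _ _ rfl hσperm hσpw hsorted'
  have hτle : Stmt15Aux.sumPairs (List.ofFn (e ∘ τ)) ≤ Stmt15Aux.sumPairs mx :=
    hmax' _ (Equiv.Perm.ofFn_comp_perm τ e)
  rw [hpoly τ, hpoly σ, hσeq, hns]
  linarith
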